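/- arXiv:2112.02563 — 2 statements merged into one kernel-verified Lean document; each statement's English description precedes it below -/
import Mathlib

section
/- Let B be a Benson-alive family of White blocks of a configuration β, witnessed by a family of regions (Rⱼ), and let z be the union of all grids of the blocks of B together with all grids of the regions Rⱼ. If β' is any configuration that agrees with β on z, then: every grid belonging to a block of B is White-occupied in β'; each block b of B is contained in some White block of β'; and the family B' of White blocks of β' that contain some block of B is Benson-alive in β', witnessed by the same regions (Rⱼ). (RZ correctness at leaf nodes: the grids of unconditionally alive blocks and their regions form a relevance zone for unconditional life.) -/
/-- The set of White-occupied grids of a configuration. -/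
def White {G : Type*} (β : G → Option Bool) : Set G := {g | β g = some true}

/-- `b` is a block of the occupied set `occ`: a connected subset of `occ`
that is maximal among connected subsets of `occ`. -/
def IsBlock {G : Type*} (GG : SimpleGraph G) (occ : Set G) (b : Set G) : Prop :=
  b ⊆ occ ∧ (GG.induce b).Connected ∧
    ∀ b', b ⊆ b' → b' ⊆ occ → (GG.induce b').Connected → b' = b

/-- `R` is vital to the block `b`: every empty grid of `R` is adjacent to some grid of `b`. -/
def Vital {G : Type*} (GG : SimpleGraph G) (β : G → Option Bool) (R b : Set G) : Prop :=
  ∀ g ∈ R, β g = none → ∃ x ∈ b, GG.Adj g x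

/-- `R` is enclosed by the family of blocks `B`: every grid outside `R` adjacent to
some grid of `R` belongs to a block of `B`. -/
def Enclosed {G : Type*} (GG : SimpleGraph G) (B : Set (Set G)) (R : Set G) : Prop :=
  ∀ g ∉ R, (∃ r ∈ R, GG.Adj g r) → ∃ b ∈ B, g ∈ b

/-- The family `B` of White blocks of `β` is Benson-alive, witnessed by the family
of regions `R`: the regions are pairwise disjoint, contain no White grid, are each
enclosed by `B`, and each block of `B` has at least two of the regions vital to it. -/
def BensonWitness {G J : Type*} (GG : SimpleGraph G) (β : G → Option Bool)
    (B : Set (Set G)) (R : J → Set G) : Prop :=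
  (∀ b ∈ B, IsBlock GG (White β) b) ∧
    Pairwise (Function.onFun Disjoint R) ∧
    (∀ j, ∀ g ∈ R j, β g ≠ some true) ∧
    (∀ j, Enclosed GG B (R j)) ∧
    (∀ b ∈ B, ∃ j₁ j₂, j₁ ≠ j₂ ∧ Vital GG β (R j₁) b ∧ Vital GG β (R j₂) b)

/-! Only the maximality of blocks is not read off `β` on `z`. Each block of `B` is still
White and connected under `β'`, hence lies in a maximal one, and replacing the blocks by
larger ones preserves both enclosure and vitality. -/

open Set

section

variable {G : Type*} (GG : SimpleGraph G)

/-- The union of all connected subsets of `occ` containing `s` is the block through `s`. -/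
theorem exists_isBlock_superset {occ s : Set G} (hs : (GG.induce s).Connected)
    (hsocc : s ⊆ occ) : ∃ b, IsBlock GG occ b ∧ s ⊆ b := by
  set S : Set (Set G) := {t | s ⊆ t ∧ t ⊆ occ ∧ (GG.induce t).Connected}
  have hsS : s ∈ S := ⟨subset_rfl, hsocc, hs⟩
  obtain ⟨x, hx⟩ := hs.nonempty
  have hconn : (GG.induce (⋃₀ S)).Connected :=
    GG.induce_sUnion_connected_of_pairwise_not_disjoint ⟨s, hsS⟩
      (fun ht ht' => ⟨x, ht.1 hx, ht'.1 hx⟩) (fun ht => ht.2.2)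
  refine ⟨⋃₀ S, ⟨sUnion_subset fun t ht => ht.2.1, hconn, fun b' hb' hb'occ hb'conn => ?_⟩,
    subset_sUnion_of_mem hsS⟩
  have hb'S : b' ∈ S := ⟨(subset_sUnion_of_mem hsS).trans hb', hb'occ, hb'conn⟩
  exact (subset_sUnion_of_mem hb'S).antisymm hb'

variable {GG}

theorem Vital.mono {β β' : G → Option Bool} {R b b' : Set G} (h : Vital GG β R b)
    (hbb' : b ⊆ b') (hagree : EqOn β' β R) : Vital GG β' R b' := fun g hg hnone => by
  obtain ⟨x, hx, hadj⟩ := h g hg ((hagree hg).symm.trans hnone)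
  exact ⟨x, hbb' hx, hadj⟩

theorem Enclosed.mono {B B' : Set (Set G)} {R : Set G} (h : Enclosed GG B R)
    (hBB' : ∀ b ∈ B, ∃ b' ∈ B', b ⊆ b') : Enclosed GG B' R := fun g hg hadj => by
  obtain ⟨b, hb, hgb⟩ := h g hg hadj
  obtain ⟨b', hb', hbb'⟩ := hBB' b hb
  exact ⟨b', hb', hbb' hgb⟩

end

/-- RZ correctness at leaf nodes: the grids of a Benson-alive (unconditionally alive)
family of White blocks together with the grids of its witnessing regions form a
relevance zone for unconditional life. -/
theorem benson_rz {G J : Type*} (GG : SimpleGraph G) (β β' : G → Option Bool)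
    (B : Set (Set G)) (R : J → Set G)
    (hW : BensonWitness GG β B R)
    (z : Set G) (hz : z = (⋃ b ∈ B, b) ∪ ⋃ j, R j)
    (hagree : ∀ g ∈ z, β' g = β g) :
    (∀ b ∈ B, ∀ g ∈ b, β' g = some true) ∧
    (∀ b ∈ B, ∃ b', IsBlock GG (White β') b' ∧ b ⊆ b') ∧
    BensonWitness GG β' {b' | IsBlock GG (White β') b' ∧ ∃ b ∈ B, b ⊆ b'} R := by
  obtain ⟨hblock, hdisj, hnotWhite, hencl, hvital⟩ := hW
  subst hz
  have hagreeR : ∀ j, EqOn β' β (R j) := fun j g hg => hagree g (Or.inr (mem_iUnion_of_mem j hg))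
  have hwhite : ∀ b ∈ B, ∀ g ∈ b, β' g = some true := fun b hb g hg =>
    (hagree g (Or.inl (mem_biUnion hb hg))).trans ((hblock b hb).1 hg)
  have hextend : ∀ b ∈ B, ∃ b', IsBlock GG (White β') b' ∧ b ⊆ b' := fun b hb =>
    exists_isBlock_superset GG (hblock b hb).2.1 (hwhite b hb)
  refine ⟨hwhite, hextend, fun b' hb' => hb'.1, hdisj,
    fun j g hg => (hagreeR j hg).trans_ne (hnotWhite j g hg), fun j => (hencl j).mono ?_, ?_⟩
  · intro b hb
    obtain ⟨b', hb', hbb'⟩ := hextend b hb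
    exact ⟨b', ⟨hb', b, hb, hbb'⟩, hbb'⟩
  · rintro b' ⟨-, b, hb, hbb'⟩
    obtain ⟨j₁, j₂, hne, hvital₁, hvital₂⟩ := hvital b hb
    exact ⟨j₁, j₂, hne, hvital₁.mono hbb' (hagreeR j₁), hvital₂.mono hbb' (hagreeR j₂)⟩
end

section
/- (Soundness of relevance-zone pruning at an AND node.) Let Win be a predicate on board configurations. Let p be a position of the AND-player with configuration β(p), and suppose some legal AND-player move m₁ at p leads to a configuration β₁ with Win β₁ which has a relevance zone z with m₁ ∉ z, and β₁ agrees with β(p) on z (the null move m₁ changed nothing inside z). Then for every legal AND-player move m at p whose grid lies outside z and which leaves the zone pattern of z unchanged (i.e., the configuration β_m after m still agrees with β(p) on z), the resulting configuration satisfies Win β_m. Consequently, when searching the AND node p, every legal move outside z may be pruned: only moves inside the must-play region z need to be examined. -/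
/-- Two board configurations agree on a zone `z` (have the same zone pattern). -/
def Agrees {G S : Type*} (z : Set G) (β₁ β₂ : G → Option S) : Prop :=
  ∀ g ∈ z, β₁ g = β₂ g

/-- `z` is a relevance zone (RZ) for the configuration `β` with respect to the
predicate `Win`: every configuration agreeing with `β` on `z` also satisfies `Win`. -/
def IsRZ {G S : Type*} (Win : (G → Option S) → Prop) (β : G → Option S) (z : Set G) : Prop :=
  ∀ β' : G → Option S, Agrees z β' β → Win β'

section

variable {G S : Type*} {z : Set G} {β₁ β₂ β₃ : G → Option S}

theorem Agrees.symm (h : Agrees z β₁ β₂) : Agrees z β₂ β₁ :=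
  fun g hg => (h g hg).symm

theorem Agrees.trans (h₁₂ : Agrees z β₁ β₂) (h₂₃ : Agrees z β₂ β₃) : Agrees z β₁ β₃ :=
  fun g hg => (h₁₂ g hg).trans (h₂₃ g hg)

theorem IsRZ.of_agrees {Win : (G → Option S) → Prop} (hrz : IsRZ Win β₁ z)
    (h : Agrees z β₂ β₁) : IsRZ Win β₂ z :=
  fun _ h' => hrz _ (h'.trans h)

end

theorem rz_pruning_and_node_general {G S : Type*} (Win : (G → Option S) → Prop)
    (legal : G → Prop) (result : G → (G → Option S))
    (βp : G → Option S) (z : Set G) (m₁ : G)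
    (hrz : IsRZ Win (result m₁) z)
    (hnull : Agrees z (result m₁) βp) :
    ∀ m, legal m → m ∉ z → Agrees z (result m) βp → Win (result m) := by
  have hrzp : IsRZ Win βp z := hrz.of_agrees hnull.symm
  exact fun m _ _ hag => hrzp _ hag

/-- Soundness of relevance-zone pruning at an AND node.
`legal m` states that `m` is a legal AND-player move at position `p` (whose
configuration is `βp`), and `result m` is the configuration reached after `m`.
If a null move `m₁` (a legal move whose resulting winning configuration has a
relevance zone `z` with `m₁ ∉ z` and unchanged pattern inside `z`) exists, then every
legal move outside `z` leaving the pattern of `z` unchanged also leads to a win;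
hence only moves inside the must-play region `z` need to be examined. -/
theorem rz_pruning_and_node {G S : Type*} (Win : (G → Option S) → Prop)
    (legal : G → Prop) (result : G → (G → Option S))
    (βp : G → Option S) (z : Set G) (m₁ : G)
    (hlegal₁ : legal m₁) (hwin₁ : Win (result m₁))
    (hrz : IsRZ Win (result m₁) z) (hm₁ : m₁ ∉ z)
    (hnull : Agrees z (result m₁) βp) :
    ∀ m, legal m → m ∉ z → Agrees z (result m) βp → Win (result m) :=
  rz_pruning_and_node_general Win legal result βp z m₁ hrz hnull
end
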